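/- Existence of a locally correct discrete Fréchet matching: for any two finite sequences of points p₀,...,p_m and q₀,...,q_n in ℝ^d, there exists a monotone coupling (a monotone lattice path from (0,0) to (m,n)) π such that every contiguous subpath of π realizes the discrete Fréchet distance between the corresponding vertex subsequences. -/

import Mathlib

/-!
Give each grid cell `c` the weight `M ^ r c`, where `r c` counts the cells of the box
`[0, m] × [0, n]` of strictly smaller cost and `M = m + n + 2` exceeds the number of points of any
monotone path in the box. A single cell of rank `r` then outweighs a whole path whose cells all
have smaller rank. Hence, on a path of minimal total weight, no subpath can have a larger
bottleneck than another route between its endpoints: splicing that route in would strictly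
decrease the weight.
-/

def IsStep (u v : ℕ × ℕ) : Prop :=
  (v.1 = u.1 + 1 ∧ v.2 = u.2) ∨ (v.1 = u.1 ∧ v.2 = u.2 + 1) ∨
    (v.1 = u.1 + 1 ∧ v.2 = u.2 + 1)

def IsGridPath (π : ℕ → ℕ × ℕ) (k : ℕ) (u v : ℕ × ℕ) : Prop :=
  1 ≤ k ∧ π 0 = u ∧ π (k - 1) = v ∧ ∀ i, i + 1 < k → IsStep (π i) (π (i + 1))

namespace IsStep

variable {u v : ℕ × ℕ}

theorem le (h : IsStep u v) : u ≤ v := by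
  obtain ⟨h1, h2⟩ | ⟨h1, h2⟩ | ⟨h1, h2⟩ := h <;> exact Prod.le_def.2 ⟨by omega, by omega⟩

theorem add_lt_add (h : IsStep u v) : u.1 + u.2 < v.1 + v.2 := by
  obtain ⟨h1, h2⟩ | ⟨h1, h2⟩ | ⟨h1, h2⟩ := h <;> omega

end IsStep

namespace IsGridPath

variable {π : ℕ → ℕ × ℕ} {k : ℕ} {u v : ℕ × ℕ}

theorem one_le (h : IsGridPath π k u v) : 1 ≤ k := h.1

theorem apply_zero (h : IsGridPath π k u v) : π 0 = u := h.2.1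

theorem apply_last (h : IsGridPath π k u v) : π (k - 1) = v := h.2.2.1

theorem isStep (h : IsGridPath π k u v) {i : ℕ} (hi : i + 1 < k) : IsStep (π i) (π (i + 1)) :=
  h.2.2.2 i hi

theorem apply_le_apply (h : IsGridPath π k u v) {i j : ℕ} (hij : i ≤ j) (hj : j < k) :
    π i ≤ π j := by
  induction j with
  | zero => rw [Nat.le_zero.1 hij]
  | succ j ih =>
    rcases hij.eq_or_lt with rfl | hij
    · exact le_rfl
    · exact (ih (by omega) (by omega)).trans (h.isStep hj).le

theorem apply_le (h : IsGridPath π k u v) {t : ℕ} (ht : t < k) : π t ≤ v :=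
  h.apply_last ▸ h.apply_le_apply (by omega) (by omega)

theorem add_le_add_apply (h : IsGridPath π k u v) {t : ℕ} (ht : t < k) :
    t + u.1 + u.2 ≤ (π t).1 + (π t).2 := by
  induction t with
  | zero => simp [h.apply_zero]
  | succ t ih =>
    have := (h.isStep ht).add_lt_add
    have := ih (by omega)
    omega

theorem length_add_le (h : IsGridPath π k u v) : k - 1 + u.1 + u.2 ≤ v.1 + v.2 :=
  h.apply_last ▸ h.add_le_add_apply (by have := h.one_le; omega)

theorem segment (h : IsGridPath π k u v) {t₁ t₂ : ℕ} (h₁₂ : t₁ ≤ t₂) (h₂ : t₂ < k) :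
    IsGridPath (fun s => π (t₁ + s)) (t₂ + 1 - t₁) (π t₁) (π t₂) := by
  refine ⟨by omega, rfl, ?_, fun i hi => h.isStep (i := t₁ + i) (by omega)⟩
  show π (t₁ + (t₂ + 1 - t₁ - 1)) = π t₂
  congr 1
  omega

end IsGridPath

theorem exists_isGridPath (m n : ℕ) : ∃ k π, IsGridPath π k (0, 0) (m, n) := by
  refine ⟨m + n + 1, fun t => if t ≤ m then (t, 0) else (m, t - m), by omega, by simp, ?_,
    fun i hi => ?_⟩
  · simp only [add_tsub_cancel_right]
    split_ifs <;> ext <;> simp <;> omega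
  · simp only [IsStep]
    split_ifs <;> simp <;> omega

/-- Replace the segment `π t₁, …, π t₂` by the `k'` points `π' 0, …, π' (k' - 1)`. -/
def splice (π π' : ℕ → ℕ × ℕ) (t₁ t₂ k' : ℕ) (t : ℕ) : ℕ × ℕ :=
  if t < t₁ then π t else if t < t₁ + k' then π' (t - t₁) else π (t + t₂ + 1 - (t₁ + k'))

section splice

variable {π π' : ℕ → ℕ × ℕ} {t₁ t₂ k' : ℕ}

theorem splice_of_lt {t : ℕ} (ht : t < t₁) : splice π π' t₁ t₂ k' t = π t := if_pos ht

theorem splice_add_of_lt {s : ℕ} (hs : s < k') : splice π π' t₁ t₂ k' (t₁ + s) = π' s := by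
  simp [splice, hs]

theorem splice_add_add (i : ℕ) : splice π π' t₁ t₂ k' (t₁ + k' + i) = π (t₂ + 1 + i) := by
  simp only [splice, if_neg (show ¬t₁ + k' + i < t₁ by omega),
    if_neg (show ¬t₁ + k' + i < t₁ + k' by omega)]
  congr 1
  omega

theorem IsGridPath.splice {k : ℕ} {u v : ℕ × ℕ} (hπ : IsGridPath π k u v) (h₁₂ : t₁ ≤ t₂)
    (h₂ : t₂ < k) (hπ' : IsGridPath π' k' (π t₁) (π t₂)) :
    IsGridPath (splice π π' t₁ t₂ k') (t₁ + k' + (k - 1 - t₂)) u v := by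
  have := hπ'.one_le
  refine ⟨by omega, ?_, ?_, fun i hi => ?_⟩
  · rcases Nat.eq_zero_or_pos t₁ with rfl | h₁
    · simpa [splice_add_of_lt (t₁ := 0) this, hπ'.apply_zero] using hπ.apply_zero
    · rw [splice_of_lt h₁, hπ.apply_zero]
  · obtain h₂ | rfl : t₂ + 1 < k ∨ t₂ + 1 = k := by omega
    · rw [show t₁ + k' + (k - 1 - t₂) - 1 = t₁ + k' + (k - 2 - t₂) by omega, splice_add_add,
        show t₂ + 1 + (k - 2 - t₂) = k - 1 by omega, hπ.apply_last]
    · rw [show t₁ + k' + (t₂ + 1 - 1 - t₂) - 1 = t₁ + (k' - 1) by omega,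
        splice_add_of_lt (by omega), hπ'.apply_last, ← hπ.apply_last, Nat.add_sub_cancel]
  · by_cases hi₁ : i + 1 < t₁
    · rw [splice_of_lt hi₁, splice_of_lt (by omega)]
      exact hπ.isStep (by omega)
    by_cases hi₂ : i + 1 = t₁
    · have hstart : _root_.splice π π' t₁ t₂ k' t₁ = π t₁ := by
        simpa [hπ'.apply_zero] using
          splice_add_of_lt (π := π) (π' := π') (t₁ := t₁) (t₂ := t₂) this
      rw [splice_of_lt (by omega), hi₂, hstart, ← hi₂]
      exact hπ.isStep (by omega)
    by_cases hi₃ : i + 1 < t₁ + k'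
    · obtain ⟨s, rfl⟩ := Nat.exists_eq_add_of_le (show t₁ ≤ i by omega)
      rw [add_assoc, splice_add_of_lt (by omega), splice_add_of_lt (by omega)]
      exact hπ'.isStep (by omega)
    by_cases hi₄ : i + 1 = t₁ + k'
    · rw [hi₄, show i = t₁ + (k' - 1) by omega, splice_add_of_lt (by omega), hπ'.apply_last,
        ← add_zero (t₁ + k'), splice_add_add]
      exact hπ.isStep (by omega)
    · obtain ⟨j, rfl⟩ := Nat.exists_eq_add_of_le (show t₁ + k' ≤ i by omega)
      rw [splice_add_add, add_assoc (t₁ + k'), splice_add_add, ← add_assoc]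
      exact hπ.isStep (by omega)

end splice

section weight

variable {β : Type*}

def pathWeight (w : β → ℕ) (π : ℕ → β) (k : ℕ) : ℕ := ∑ t ∈ Finset.range k, w (π t)

theorem Finset.sum_range_add_add {M : Type*} [AddCommMonoid M] (f : ℕ → M) (a b c : ℕ) :
    ∑ t ∈ range (a + b + c), f t =
      ∑ t ∈ range a, f t + ∑ t ∈ range b, f (a + t) + ∑ t ∈ range c, f (a + b + t) := by
  rw [Finset.sum_range_add, Finset.sum_range_add]

theorem pathWeight_splice (w : ℕ × ℕ → ℕ) (π π' : ℕ → ℕ × ℕ) (t₁ t₂ k' l : ℕ) :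
    pathWeight w (splice π π' t₁ t₂ k') (t₁ + k' + l) =
      ∑ t ∈ Finset.range t₁, w (π t) + pathWeight w π' k' +
        ∑ i ∈ Finset.range l, w (π (t₂ + 1 + i)) := by
  rw [pathWeight, Finset.sum_range_add_add, pathWeight]
  congr 1
  · congr 1
    · exact Finset.sum_congr rfl fun t ht => by rw [splice_of_lt (Finset.mem_range.1 ht)]
    · exact Finset.sum_congr rfl fun s hs => by rw [splice_add_of_lt (Finset.mem_range.1 hs)]
  · simp only [splice_add_add]

theorem pathWeight_eq_add_segment (w : β → ℕ) (π : ℕ → β) {k t₁ t₂ : ℕ} (h₁₂ : t₁ ≤ t₂)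
    (h₂ : t₂ < k) :
    pathWeight w π k =
      ∑ t ∈ Finset.range t₁, w (π t) + pathWeight w (fun s => π (t₁ + s)) (t₂ + 1 - t₁) +
        ∑ i ∈ Finset.range (k - 1 - t₂), w (π (t₂ + 1 + i)) := by
  conv_lhs => rw [pathWeight, show k = t₁ + (t₂ + 1 - t₁) + (k - 1 - t₂) by omega]
  rw [Finset.sum_range_add_add, show t₁ + (t₂ + 1 - t₁) = t₂ + 1 by omega]
  rfl

theorem exists_isGridPath_forall_pathWeight_le (w : ℕ × ℕ → ℕ) {u v : ℕ × ℕ}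
    (h : ∃ k π, IsGridPath π k u v) :
    ∃ k π, IsGridPath π k u v ∧
      ∀ k' π', IsGridPath π' k' u v → pathWeight w π k ≤ pathWeight w π' k' := by
  classical
  have hW : ∃ W k π, IsGridPath π k u v ∧ pathWeight w π k = W :=
    let ⟨k, π, hπ⟩ := h; ⟨_, k, π, hπ, rfl⟩
  obtain ⟨k, π, hπ, hπW⟩ := Nat.find_spec hW
  exact ⟨k, π, hπ, fun k' π' hπ' => hπW ▸ Nat.find_min' hW ⟨k', π', hπ', rfl⟩⟩

/-- Otherwise splicing `π'` into `π` would give a cheaper path from `u` to `v`. -/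
theorem IsGridPath.pathWeight_segment_le {w : ℕ × ℕ → ℕ} {π π' : ℕ → ℕ × ℕ}
    {k k' t₁ t₂ : ℕ} {u v : ℕ × ℕ} (hπ : IsGridPath π k u v)
    (hmin : ∀ k'' π'', IsGridPath π'' k'' u v → pathWeight w π k ≤ pathWeight w π'' k'')
    (h₁₂ : t₁ ≤ t₂) (h₂ : t₂ < k) (hπ' : IsGridPath π' k' (π t₁) (π t₂)) :
    pathWeight w (fun s => π (t₁ + s)) (t₂ + 1 - t₁) ≤ pathWeight w π' k' := by
  have := hmin _ _ (hπ.splice h₁₂ h₂ hπ')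
  rw [pathWeight_splice, pathWeight_eq_add_segment w π h₁₂ h₂] at this
  omega

end weight

section bottleneck

variable {α β : Type*} [LinearOrder α]

def countBelow (s : Finset β) (D : β → α) (x : α) : ℕ := (s.filter (D · < x)).card

def rankWeight (s : Finset β) (D : β → α) (M : ℕ) (c : β) : ℕ := M ^ countBelow s D (D c)

theorem countBelow_lt_countBelow {s : Finset β} {D : β → α} {c : β} {x : α} (hc : c ∈ s)
    (h : D c < x) : countBelow s D (D c) < countBelow s D x := by
  refine Finset.card_lt_card ⟨Finset.monotone_filter_right _ fun _ _ hc' => hc'.trans h, ?_⟩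
  intro hsub
  simpa using (Finset.mem_filter.1 (hsub (Finset.mem_filter.2 ⟨hc, h⟩))).2

theorem Nat.sum_range_pow_lt_pow {M k r : ℕ} {e : ℕ → ℕ} (hk : k < M) (he : ∀ i < k, e i < r) :
    ∑ i ∈ Finset.range k, M ^ e i < M ^ r := by
  cases r with
  | zero =>
    obtain rfl : k = 0 := Nat.eq_zero_of_not_pos fun hk₀ => Nat.not_lt_zero _ (he 0 hk₀)
    simp
  | succ r =>
    calc ∑ i ∈ Finset.range k, M ^ e i
        ≤ ∑ _i ∈ Finset.range k, M ^ r := Finset.sum_le_sum fun i hi =>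
          Nat.pow_le_pow_right (by omega) (Nat.le_of_lt_succ (he i (Finset.mem_range.1 hi)))
      _ = k * M ^ r := by rw [Finset.sum_const, Finset.card_range, smul_eq_mul]
      _ < M ^ (r + 1) := by
        rw [pow_succ']
        exact Nat.mul_lt_mul_of_pos_right hk (pow_pos (by omega) r)

variable [OrderBot α]

def bottleneck (D : β → α) (π : ℕ → β) (k : ℕ) : α := (Finset.Icc 0 (k - 1)).sup fun t => D (π t)

theorem Finset.sup_Icc_eq_bottleneck (D : β → α) (π : ℕ → β) {t₁ t₂ : ℕ} (h₁₂ : t₁ ≤ t₂) :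
    (Icc t₁ t₂).sup (fun t => D (π t)) = bottleneck D (fun s => π (t₁ + s)) (t₂ + 1 - t₁) := by
  have hIcc : Icc t₁ t₂ = (Icc 0 (t₂ + 1 - t₁ - 1)).map (addLeftEmbedding t₁) := by
    rw [Finset.map_add_left_Icc, add_zero]
    congr 1
    omega
  rw [hIcc, Finset.sup_map]
  rfl

theorem bottleneck_le_of_pathWeight_le {s : Finset β} {D : β → α} {M j k' : ℕ} {σ π' : ℕ → β}
    (hj : 1 ≤ j) (hk' : k' < M) (hπ' : ∀ i < k', π' i ∈ s)
    (h : pathWeight (rankWeight s D M) σ j ≤ pathWeight (rankWeight s D M) π' k') :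
    bottleneck D σ j ≤ bottleneck D π' k' := by
  by_contra! hlt
  obtain ⟨t, ht, hσt⟩ := Finset.exists_mem_eq_sup (Finset.Icc 0 (j - 1))
    ⟨0, Finset.mem_Icc.2 ⟨le_rfl, Nat.zero_le _⟩⟩ fun t => D (σ t)
  rw [bottleneck, bottleneck, hσt] at hlt
  have hbelow : ∀ i < k', countBelow s D (D (π' i)) < countBelow s D (D (σ t)) := fun i hi =>
    countBelow_lt_countBelow (hπ' i hi) <|
      (Finset.le_sup (f := fun i => D (π' i)) (Finset.mem_Icc.2 ⟨Nat.zero_le _, by omega⟩)).trans_lt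
        hlt
  have ht : t < j := by have := Finset.mem_Icc.1 ht; omega
  have : pathWeight (rankWeight s D M) π' k' < pathWeight (rankWeight s D M) σ j :=
    calc _ < rankWeight s D M (σ t) := Nat.sum_range_pow_lt_pow hk' hbelow
      _ ≤ _ := Finset.single_le_sum (f := fun t => rankWeight s D M (σ t))
          (fun _ _ => Nat.zero_le _) (Finset.mem_range.2 ht)
  omega

theorem exists_isGridPath_isLeast_bottleneck (D : ℕ × ℕ → α) (m n : ℕ) :
    ∃ k π, IsGridPath π k (0, 0) (m, n) ∧ ∀ t₁ t₂, t₁ ≤ t₂ → t₂ < k →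
      IsLeast {r | ∃ k' π', IsGridPath π' k' (π t₁) (π t₂) ∧ r = bottleneck D π' k'}
        ((Finset.Icc t₁ t₂).sup fun t => D (π t)) := by
  obtain ⟨k, π, hπ, hmin⟩ := exists_isGridPath_forall_pathWeight_le
    (rankWeight (Finset.Iic (m, n)) D (m + n + 2)) (exists_isGridPath m n)
  refine ⟨k, π, hπ, fun t₁ t₂ h₁₂ h₂ => ?_⟩
  rw [Finset.sup_Icc_eq_bottleneck D π h₁₂]
  refine ⟨⟨_, _, hπ.segment h₁₂ h₂, rfl⟩, ?_⟩
  rintro _ ⟨k', π', hπ', rfl⟩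
  have hend : π t₂ ≤ (m, n) := hπ.apply_le h₂
  have hlen := hπ'.length_add_le
  obtain ⟨hm, hn⟩ := Prod.mk_le_mk.1 hend
  exact bottleneck_le_of_pathWeight_le (by omega) (by omega)
    (fun i hi => Finset.mem_Iic.2 ((hπ'.apply_le hi).trans hend))
    (hπ.pathWeight_segment_le hmin h₁₂ h₂ hπ')

end bottleneck

theorem exists_locally_correct_discrete_frechet_matching {d : ℕ} (m n : ℕ)
    (p q : ℕ → EuclideanSpace ℝ (Fin d)) :
    ∃ (k : ℕ) (π : ℕ → ℕ × ℕ), IsGridPath π k (0, 0) (m, n) ∧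
      ∀ t₁ t₂ : ℕ, t₁ ≤ t₂ → t₂ < k →
        IsLeast {r : NNReal | ∃ (k' : ℕ) (π' : ℕ → ℕ × ℕ),
            IsGridPath π' k' (π t₁) (π t₂) ∧
            r = Finset.sup (Finset.Icc 0 (k' - 1))
                  (fun s => nndist (p (π' s).1) (q (π' s).2))}
          (Finset.sup (Finset.Icc t₁ t₂) (fun t => nndist (p (π t).1) (q (π t).2))) :=
  exists_isGridPath_isLeast_bottleneck (fun c => nndist (p c.1) (q c.2)) m n
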